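/- Let p₁ = p_{1R} + i p_{1I} ∈ ℂ with p_{1R} > 0 and α₁⁽¹⁾, α₁⁽²⁾ ∈ ℂ not both zero. With η₁(y,s) = p₁ y + s/p₁, f(y,s) = −1 − ((|α₁⁽¹⁾|² + |α₁⁽²⁾|²) |p₁|⁴ / (4 (p₁ + conj(p₁))²)) e^{η₁ + conj(η₁)}, g_i(y,s) = −α₁⁽ⁱ⁾ e^{η₁} (i = 1,2), define A_i = α₁⁽ⁱ⁾/√(|α₁⁽¹⁾|² + |α₁⁽²⁾|²), η_{1R}(y,s) = p_{1R}(y + s/|p₁|²), η_{1I}(y,s) = p_{1I}(y − s/|p₁|²), and η_{10} = log(√(|α₁⁽¹⁾|² + |α₁⁽²⁾|²) |p₁|² / (4 p_{1R})). Then |A₁|² + |A₂|² = 1 and for all (y,s) ∈ ℝ² and i = 1,2: g_i(y,s)/f(y,s) = A_i · (2 p_{1R}/|p₁|²) · e^{i η_{1I}(y,s)} · sech(η_{1R}(y,s) + η_{10}). -/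

import Mathlib

/-!
Writing `p₁ = p_{1R} + i p_{1I}`, the phase splits as `η₁ = η_{1R} + i η_{1I}`, so
`η₁ + conj η₁ = 2 η_{1R}`, and the constant in front of `e^{η₁ + conj η₁}` in `f` is exactly
`e^{2 η_{10}}`. Hence `f = -(1 + e^{2(η_{1R} + η_{10})})` is real, and
`g_i / f = α₁⁽ⁱ⁾ e^{i η_{1I}} e^{η_{1R}} / (1 + e^{2(η_{1R} + η_{10})})`, where
`e^a / (1 + e^{2(a + c)}) = (e^{-c} / 2) sech (a + c)` and `e^{-η_{10}} / 2` is the amplitude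
`2 p_{1R} / |p₁|²` divided by the normalization `√(|α₁⁽¹⁾|² + |α₁⁽²⁾|²)`.
-/

open Complex

/-- `sech u = 2/(e^u + e^{−u})`. -/
noncomputable def sech (u : ℝ) : ℝ := 2 / (Real.exp u + Real.exp (-u))

theorem sech_eq_two_mul_exp_div (u : ℝ) :
    sech u = 2 * Real.exp u / (1 + Real.exp (2 * u)) := by
  rw [sech, Real.exp_neg, two_mul u, Real.exp_add]
  field_simp
  ring

theorem exp_div_one_add_exp_two_mul (a c : ℝ) :
    Real.exp a / (1 + Real.exp (2 * (a + c))) = Real.exp (-c) / 2 * sech (a + c) := by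
  rw [sech_eq_two_mul_exp_div, Real.exp_add, Real.exp_neg]
  field_simp

theorem mul_ofReal_add_ofReal_div (p : ℂ) (y s : ℝ) :
    p * y + s / p
      = ((p.re * (y + s / normSq p) : ℝ) : ℂ) + I * ((p.im * (y - s / normSq p) : ℝ) : ℂ) := by
  apply Complex.ext <;>
    simp only [add_re, add_im, mul_re, mul_im, ofReal_re, ofReal_im, I_re, I_im, div_re, div_im] <;>
    ring

theorem ofReal_mul_norm_pow_four_div_add_conj_sq (N : ℝ) (hN : 0 ≤ N) (p : ℂ) :
    (N : ℂ) * (‖p‖ : ℂ) ^ 4 / (4 * (p + starRingEnd ℂ p) ^ 2)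
      = (((√N * normSq p / (4 * p.re)) ^ 2 : ℝ) : ℂ) := by
  have hp4 : ‖p‖ ^ 4 = normSq p ^ 2 := by rw [← Complex.sq_norm]; ring
  rw [add_conj, div_pow, mul_pow, Real.sq_sqrt hN, ← hp4]
  push_cast
  ring

theorem neg_one_sub_exp_mul_exp_add_conj (a b c : ℝ) :
    -1 - (Real.exp (2 * c) : ℂ) * exp ((a + I * b) + starRingEnd ℂ (a + I * b))
      = -((1 + Real.exp (2 * (a + c)) : ℝ) : ℂ) := by
  have hre : (a + I * b : ℂ).re = a := by simp
  rw [add_conj, hre, mul_add 2 a c, Real.exp_add]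
  push_cast
  ring

theorem neg_mul_exp_div_neg_one_add_exp (α : ℂ) (a b c : ℝ) :
    -α * exp (a + I * b) / -((1 + Real.exp (2 * (a + c)) : ℝ) : ℂ)
      = α * ((Real.exp (-c) / 2 * sech (a + c) : ℝ) : ℂ) * exp (I * b) := by
  rw [← exp_div_one_add_exp_two_mul, exp_add, neg_mul, neg_div_neg_eq]
  push_cast
  ring

theorem sq_norm_add_sq_norm_pos {α₁ α₂ : ℂ} (h : ¬(α₁ = 0 ∧ α₂ = 0)) :
    0 < ‖α₁‖ ^ 2 + ‖α₂‖ ^ 2 := by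
  rcases not_and_or.mp h with h | h <;> have := norm_pos_iff.mpr h <;> positivity

theorem sq_norm_div_sqrt_add_sq_norm_div_sqrt {α₁ α₂ : ℂ} (h : ¬(α₁ = 0 ∧ α₂ = 0)) :
    ‖α₁ / (√(‖α₁‖ ^ 2 + ‖α₂‖ ^ 2) : ℂ)‖ ^ 2 + ‖α₂ / (√(‖α₁‖ ^ 2 + ‖α₂‖ ^ 2) : ℂ)‖ ^ 2 = 1 := by
  simp only [norm_div, norm_real, Real.norm_of_nonneg (Real.sqrt_nonneg _), div_pow,
    Real.sq_sqrt (sq_norm_add_sq_norm_pos h).le, ← add_div]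
  exact div_self (sq_norm_add_sq_norm_pos h).ne'

/-- Parametric form of the one-soliton solution of the coupled complex short pulse
equation: `|A₁|² + |A₂|² = 1` and
`g_i/f = A_i (2 p_{1R}/|p₁|²) e^{i η_{1I}} sech(η_{1R} + η_{10})` for `i = 1,2`. -/
theorem ccsp_one_soliton_profile
    (p1R p1I : ℝ) (hp : 0 < p1R)
    (α₁ α₂ : ℂ) (hα : ¬(α₁ = 0 ∧ α₂ = 0))
    (p₁ : ℂ) (hp₁ : p₁ = ⟨p1R, p1I⟩)
    (η₁ : ℝ → ℝ → ℂ) (hη₁ : ∀ y s, η₁ y s = p₁ * (y : ℂ) + (s : ℂ) / p₁)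
    (f g₁ g₂ : ℝ → ℝ → ℂ)
    (hf : ∀ y s, f y s = -1 -
      (((‖α₁‖ : ℂ)^2 + (‖α₂‖ : ℂ)^2) * (‖p₁‖ : ℂ)^4
          / (4 * (p₁ + starRingEnd ℂ p₁)^2))
        * Complex.exp (η₁ y s + starRingEnd ℂ (η₁ y s)))
    (hg₁ : ∀ y s, g₁ y s = -α₁ * Complex.exp (η₁ y s))
    (hg₂ : ∀ y s, g₂ y s = -α₂ * Complex.exp (η₁ y s))
    (A₁ A₂ : ℂ)
    (hA₁ : A₁ = α₁ / ((Real.sqrt ((‖α₁‖)^2 + (‖α₂‖)^2) : ℝ) : ℂ))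
    (hA₂ : A₂ = α₂ / ((Real.sqrt ((‖α₁‖)^2 + (‖α₂‖)^2) : ℝ) : ℂ))
    (η1R η1I : ℝ → ℝ → ℝ)
    (hη1R : ∀ y s, η1R y s = p1R * (y + s / (p1R^2 + p1I^2)))
    (hη1I : ∀ y s, η1I y s = p1I * (y - s / (p1R^2 + p1I^2)))
    (η10 : ℝ)
    (hη10 : η10 = Real.log (Real.sqrt ((‖α₁‖)^2 + (‖α₂‖)^2)
      * (p1R^2 + p1I^2) / (4 * p1R))) :
    ((‖A₁‖)^2 + (‖A₂‖)^2 = 1) ∧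
    (∀ y s,
      g₁ y s / f y s
        = A₁ * ((2 * p1R / (p1R^2 + p1I^2) : ℝ) : ℂ)
            * Complex.exp (Complex.I * (η1I y s : ℂ)) * ((sech (η1R y s + η10) : ℝ) : ℂ)
      ∧ g₂ y s / f y s
        = A₂ * ((2 * p1R / (p1R^2 + p1I^2) : ℝ) : ℂ)
            * Complex.exp (Complex.I * (η1I y s : ℂ)) * ((sech (η1R y s + η10) : ℝ) : ℂ)) := by
  set N := ‖α₁‖ ^ 2 + ‖α₂‖ ^ 2
  set M := p1R ^ 2 + p1I ^ 2
  have hN : 0 < N := sq_norm_add_sq_norm_pos hα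
  have hM : normSq p₁ = M := by rw [hp₁, normSq_mk]; ring
  have hexp : Real.exp η10 = √N * M / (4 * p1R) := by
    rw [hη10, Real.exp_log (by positivity)]
  have hη : ∀ y s, η₁ y s = η1R y s + I * η1I y s := by
    intro y s
    rw [hη₁, mul_ofReal_add_ofReal_div, hM, hη1R, hη1I, hp₁]
  have hcoeff : ((‖α₁‖ : ℂ) ^ 2 + (‖α₂‖ : ℂ) ^ 2) * (‖p₁‖ : ℂ) ^ 4
      / (4 * (p₁ + starRingEnd ℂ p₁) ^ 2) = ((Real.exp (2 * η10) : ℝ) : ℂ) := by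
    rw [two_mul, Real.exp_add, hexp, ← sq, ← hM, show p1R = p₁.re by rw [hp₁]]
    exact_mod_cast ofReal_mul_norm_pow_four_div_add_conj_sq N hN.le p₁
  have hscale : Real.exp (-η10) / 2 = (√N)⁻¹ * (2 * p1R / M) := by
    rw [Real.exp_neg, hexp]; field_simp; norm_num
  have hratio : ∀ (α : ℂ) y s, -α * exp (η₁ y s) / f y s
      = α / (√N : ℂ) * ((2 * p1R / M : ℝ) : ℂ) * exp (I * η1I y s)
          * ((sech (η1R y s + η10) : ℝ) : ℂ) := by
    intro α y s
    rw [hf, hcoeff, hη, neg_one_sub_exp_mul_exp_add_conj, neg_mul_exp_div_neg_one_add_exp, hscale]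
    push_cast
    ring
  refine ⟨hA₁ ▸ hA₂ ▸ sq_norm_div_sqrt_add_sq_norm_div_sqrt hα, fun y s => ⟨?_, ?_⟩⟩
  · rw [hg₁, hratio, hA₁]
  · rw [hg₂, hratio, hA₂]
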